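/- For every j with 0 ≤ j ≤ k, the row of N_j at the apex vertex (0,0) is the indicator of the vertex (j,0): N_j((0,0),(p,l)) = 1 if (p,l) = (j,0), and N_j((0,0),(p,l)) = 0 otherwise. (This expresses that in the fusion graph 𝒜⁽ⁿ⁾ the vertex (j,0) labels the irreducible λ_{(j,0)} = λ_{(j,0)} ⊗ λ_{(0,0)}.) -/
import Mathlib


open scoped Matrix

/-- Vertices of the SU(3) graph `𝒜⁽ⁿ⁾` (with `n = k + 3`): pairs `(p, l)` of naturals
with `p + l ≤ k`, encoded inside `Fin (k+1) × Fin (k+1)`. -/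
abbrev GraphAVertex (k : ℕ) : Type :=
  {v : Fin (k + 1) × Fin (k + 1) // (v.1 : ℕ) + (v.2 : ℕ) ≤ k}

/-- Adjacency matrix `Δ` of the graph `𝒜⁽ⁿ⁾`: there is an edge `(p,l) → (p',l')` iff
`(p',l')` is `(p+1,l)`, `(p−1,l+1)` (requiring `p ≥ 1`) or `(p,l−1)` (requiring `l ≥ 1`). -/
def graphAAdj (k : ℕ) : Matrix (GraphAVertex k) (GraphAVertex k) ℤ := fun v w =>
  if ((w.1.1 : ℕ) = (v.1.1 : ℕ) + 1 ∧ (w.1.2 : ℕ) = (v.1.2 : ℕ))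
      ∨ (1 ≤ (v.1.1 : ℕ) ∧ (w.1.1 : ℕ) + 1 = (v.1.1 : ℕ) ∧ (w.1.2 : ℕ) = (v.1.2 : ℕ) + 1)
      ∨ (1 ≤ (v.1.2 : ℕ) ∧ (w.1.1 : ℕ) = (v.1.1 : ℕ) ∧ (w.1.2 : ℕ) + 1 = (v.1.2 : ℕ))
  then 1 else 0

/-- The recursively defined fusion (nimrep) matrices `N_j` of the graph `𝒜⁽ⁿ⁾`:
`N₀ = 1`, `N₁ = Δ`, `N₂ = Δ·Δ − Δᵀ`, `N_{j+3} = Δ·N_{j+2} − Δᵀ·N_{j+1} + N_j`. -/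
def graphAFusion (k : ℕ) : ℕ → Matrix (GraphAVertex k) (GraphAVertex k) ℤ
  | 0 => 1
  | 1 => graphAAdj k
  | 2 => graphAAdj k * graphAAdj k - (graphAAdj k)ᵀ
  | j + 3 =>
      graphAAdj k * graphAFusion k (j + 2) - (graphAAdj k)ᵀ * graphAFusion k (j + 1)
        + graphAFusion k j

/-- The apex vertex `(0,0)` of the graph `𝒜⁽ⁿ⁾`. -/
def graphAApex (k : ℕ) : GraphAVertex k :=
  ⟨(0, 0), by simp⟩

-- helpers
def vmk (k x y : ℕ) (h : x + y ≤ k) : GraphAVertex k :=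
  ⟨(⟨x, by omega⟩, ⟨y, by omega⟩), h⟩

@[simp] lemma vmk_fst (k x y : ℕ) (h : x + y ≤ k) : ((vmk k x y h).1.1 : ℕ) = x := rfl
@[simp] lemma vmk_snd (k x y : ℕ) (h : x + y ≤ k) : ((vmk k x y h).1.2 : ℕ) = y := rfl

lemma vert_ext {k : ℕ} {u w : GraphAVertex k} (h1 : (u.1.1 : ℕ) = (w.1.1 : ℕ))
    (h2 : (u.1.2 : ℕ) = (w.1.2 : ℕ)) : u = w :=
  Subtype.ext (Prod.ext (Fin.ext h1) (Fin.ext h2))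

def pt {k : ℕ} (s t x y : ℕ) (u : GraphAVertex k) : ℤ :=
  if (u.1.1 : ℕ) + s = x ∧ (u.1.2 : ℕ) + t = y then 1 else 0

lemma pt_sum {k : ℕ} (s t x y : ℕ) :
    ∑ u : GraphAVertex k, pt s t x y u
      = if s ≤ x ∧ t ≤ y ∧ x + y ≤ k + s + t then 1 else 0 := by
  by_cases h : s ≤ x ∧ t ≤ y ∧ x + y ≤ k + s + t
  · rw [if_pos h]
    have hx : (x - s) + (y - t) ≤ k := by omega
    have key : ∀ u : GraphAVertex k, pt s t x y u
        = if u = vmk k (x - s) (y - t) hx then 1 else 0 := by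
      intro u
      unfold pt
      by_cases h1 : (u.1.1 : ℕ) + s = x ∧ (u.1.2 : ℕ) + t = y
      · rw [if_pos h1, if_pos (vert_ext (by simp; omega) (by simp; omega))]
      · rw [if_neg h1, if_neg]
        rintro rfl
        simp at h1
        omega
    rw [Finset.sum_congr rfl (fun u _ => key u)]
    simp
  · rw [if_neg h]
    apply Finset.sum_eq_zero
    intro u _
    unfold pt
    rw [if_neg]
    have := u.2
    intro h1
    exact h ⟨by omega, by omega, by omega⟩

lemma sum_pt_mul {k : ℕ} (s1 t1 x1 y1 s2 t2 x2 y2 : ℕ) :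
    ∑ u : GraphAVertex k, pt s1 t1 x1 y1 u * pt s2 t2 x2 y2 u
      = if x1 + s2 = x2 + s1 ∧ y1 + t2 = y2 + t1 ∧ s1 ≤ x1 ∧ t1 ≤ y1 ∧ x1 + y1 ≤ k + s1 + t1
        then 1 else 0 := by
  have key : ∀ u : GraphAVertex k, pt s1 t1 x1 y1 u * pt s2 t2 x2 y2 u
      = if x1 + s2 = x2 + s1 ∧ y1 + t2 = y2 + t1 then pt s1 t1 x1 y1 u else 0 := by
    intro u
    unfold pt
    split_ifs <;> omega
  rw [Finset.sum_congr rfl (fun u _ => key u)]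
  by_cases hc : x1 + s2 = x2 + s1 ∧ y1 + t2 = y2 + t1
  · simp only [if_pos hc, pt_sum]
    split_ifs <;> omega
  · simp only [if_neg hc, Finset.sum_const_zero]
    rw [if_neg (by tauto)]

lemma sum_pt_fun {k : ℕ} (x y : ℕ) (h : x + y ≤ k) (f : GraphAVertex k → ℤ) :
    ∑ u : GraphAVertex k, pt 0 0 x y u * f u = f (vmk k x y h) := by
  have key : ∀ u : GraphAVertex k, pt 0 0 x y u * f u
      = if u = vmk k x y h then f u else 0 := by
    intro u
    unfold pt
    by_cases h1 : (u.1.1 : ℕ) + 0 = x ∧ (u.1.2 : ℕ) + 0 = y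
    · rw [if_pos h1, if_pos (vert_ext (by simp; omega) (by simp; omega)), one_mul]
    · rw [if_neg h1, if_neg, zero_mul]
      rintro rfl
      simp at h1
  rw [Finset.sum_congr rfl (fun u _ => key u)]
  simp

lemma adj_row {k : ℕ} (v u : GraphAVertex k) :
    graphAAdj k v u
      = pt 0 0 ((v.1.1 : ℕ) + 1) (v.1.2 : ℕ) u + pt 1 0 (v.1.1 : ℕ) ((v.1.2 : ℕ) + 1) u
        + pt 0 1 (v.1.1 : ℕ) (v.1.2 : ℕ) u := by
  unfold graphAAdj pt
  split_ifs <;> omega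

lemma adj_col {k : ℕ} (v u : GraphAVertex k) :
    graphAAdj k u v
      = pt 1 0 (v.1.1 : ℕ) (v.1.2 : ℕ) u + pt 0 1 ((v.1.1 : ℕ) + 1) (v.1.2 : ℕ) u
        + pt 0 0 (v.1.1 : ℕ) ((v.1.2 : ℕ) + 1) u := by
  unfold graphAAdj pt
  split_ifs <;> omega

private lemma addc {x x' y y' : ℤ} (h : x = x') (h' : y = y') : x + y = x' + y' := by
  rw [h, h']

lemma adj_normal (k : ℕ) : graphAAdj k * (graphAAdj k)ᵀ = (graphAAdj k)ᵀ * graphAAdj k := by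
  ext v w
  have hv : (v.1.1 : ℕ) + (v.1.2 : ℕ) ≤ k := v.2
  have hw : (w.1.1 : ℕ) + (w.1.2 : ℕ) ≤ k := w.2
  set a := (v.1.1 : ℕ) with ha
  set b := (v.1.2 : ℕ) with hb
  set c := (w.1.1 : ℕ) with hc
  set d := (w.1.2 : ℕ) with hd
  simp only [Matrix.mul_apply, Matrix.transpose_apply]
  have hL : ∀ u : GraphAVertex k, graphAAdj k v u * graphAAdj k w u =
      pt 0 0 (a+1) b u * pt 0 0 (c+1) d u
    + pt 0 0 (a+1) b u * pt 1 0 c (d+1) u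
    + pt 0 0 (a+1) b u * pt 0 1 c d u
    + pt 1 0 a (b+1) u * pt 0 0 (c+1) d u
    + pt 1 0 a (b+1) u * pt 1 0 c (d+1) u
    + pt 1 0 a (b+1) u * pt 0 1 c d u
    + pt 0 1 a b u * pt 0 0 (c+1) d u
    + pt 0 1 a b u * pt 1 0 c (d+1) u
    + pt 0 1 a b u * pt 0 1 c d u := by
    intro u; rw [adj_row v u, adj_row w u]; ring
  have hR : ∀ u : GraphAVertex k, graphAAdj k u v * graphAAdj k u w =
      pt 1 0 a b u * pt 1 0 c d u
    + pt 1 0 a b u * pt 0 1 (c+1) d u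
    + pt 1 0 a b u * pt 0 0 c (d+1) u
    + pt 0 1 (a+1) b u * pt 1 0 c d u
    + pt 0 1 (a+1) b u * pt 0 1 (c+1) d u
    + pt 0 1 (a+1) b u * pt 0 0 c (d+1) u
    + pt 0 0 a (b+1) u * pt 1 0 c d u
    + pt 0 0 a (b+1) u * pt 0 1 (c+1) d u
    + pt 0 0 a (b+1) u * pt 0 0 c (d+1) u := by
    intro u; rw [adj_col v u, adj_col w u]; ring
  rw [Finset.sum_congr rfl fun u _ => hL u, Finset.sum_congr rfl fun u _ => hR u]
  simp only [Finset.sum_add_distrib, sum_pt_mul]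
  trans ((if a = c ∧ b = d ∧ a + b + 1 ≤ k then (1:ℤ) else 0)
    + (if c = a + 2 ∧ b = d + 1 then (1:ℤ) else 0)
    + (if c = a + 1 ∧ d = b + 1 then (1:ℤ) else 0)
    + (if a = c + 2 ∧ d = b + 1 then (1:ℤ) else 0)
    + (if a = c ∧ b = d ∧ 1 ≤ a then (1:ℤ) else 0)
    + (if a = c + 1 ∧ d = b + 2 then (1:ℤ) else 0)
    + (if a = c + 1 ∧ b = d + 1 then (1:ℤ) else 0)
    + (if c = a + 1 ∧ b = d + 2 then (1:ℤ) else 0)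
    + (if a = c ∧ b = d ∧ 1 ≤ b then (1:ℤ) else 0))
  · refine addc (addc (addc (addc (addc (addc (addc (addc ?_ ?_) ?_) ?_) ?_) ?_) ?_) ?_) ?_ <;>
      (split_ifs <;> omega)
  trans ((if a = c ∧ b = d ∧ 1 ≤ a then (1:ℤ) else 0)
    + (if a = c + 2 ∧ d = b + 1 then (1:ℤ) else 0)
    + (if a = c + 1 ∧ b = d + 1 then (1:ℤ) else 0)
    + (if c = a + 2 ∧ b = d + 1 then (1:ℤ) else 0)
    + (if a = c ∧ b = d ∧ 1 ≤ b then (1:ℤ) else 0)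
    + (if c = a + 1 ∧ b = d + 2 then (1:ℤ) else 0)
    + (if c = a + 1 ∧ d = b + 1 then (1:ℤ) else 0)
    + (if a = c + 1 ∧ d = b + 2 then (1:ℤ) else 0)
    + (if a = c ∧ b = d ∧ a + b + 1 ≤ k then (1:ℤ) else 0))
  · ring
  · symm
    refine addc (addc (addc (addc (addc (addc (addc (addc ?_ ?_) ?_) ?_) ?_) ?_) ?_) ?_) ?_ <;>
      (split_ifs <;> omega)

lemma commute_fusion (k : ℕ) : ∀ j, Commute (graphAAdj k) (graphAFusion k j) ∧
    Commute (graphAAdj k)ᵀ (graphAFusion k j) := by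
  intro j
  induction j using Nat.strong_induction_on with
  | _ j ih =>
    have hn : Commute (graphAAdj k) (graphAAdj k)ᵀ := adj_normal k
    match j with
    | 0 => exact ⟨Commute.one_right _, Commute.one_right _⟩
    | 1 => exact ⟨Commute.refl _, hn.symm⟩
    | 2 =>
      constructor
      · simp only [graphAFusion]
        exact ((Commute.refl _).mul_right (Commute.refl _)).sub_right hn
      · simp only [graphAFusion]
        exact (hn.symm.mul_right hn.symm).sub_right (Commute.refl _)
    | (m + 3) =>
      obtain ⟨h2a, h2t⟩ := ih (m + 2) (by omega)
      obtain ⟨h1a, h1t⟩ := ih (m + 1) (by omega)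
      obtain ⟨h0a, h0t⟩ := ih m (by omega)
      constructor
      · simp only [graphAFusion]
        exact (((Commute.refl _).mul_right h2a).sub_right (hn.mul_right h1a)).add_right h0a
      · simp only [graphAFusion]
        exact ((hn.symm.mul_right h2t).sub_right ((Commute.refl _).mul_right h1t)).add_right h0t

lemma apex_fst (k : ℕ) : ((graphAApex k).1.1 : ℕ) = 0 := by simp [graphAApex]
lemma apex_snd (k : ℕ) : ((graphAApex k).1.2 : ℕ) = 0 := by simp [graphAApex]

lemma fusion_apex_row (k : ℕ) (hk : 1 ≤ k) : ∀ j, j ≤ k → ∀ w : GraphAVertex k,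
    graphAFusion k j (graphAApex k) w
      = if ((w.1.1 : ℕ) = j ∧ (w.1.2 : ℕ) = 0) then 1 else 0 := by
  intro j
  induction j using Nat.strong_induction_on with
  | _ j ih =>
    match j with
    | 0 =>
      intro _ w
      simp only [graphAFusion, Matrix.one_apply]
      by_cases h : graphAApex k = w
      · rw [if_pos h, if_pos ⟨by rw [← h, apex_fst], by rw [← h, apex_snd]⟩]
      · rw [if_neg h, if_neg]
        rintro ⟨h1, h2⟩
        exact h (vert_ext ((apex_fst k).trans h1.symm) ((apex_snd k).trans h2.symm))
    | 1 =>
      intro _ w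
      simp only [graphAFusion]
      unfold graphAAdj
      rw [apex_fst, apex_snd]
      split_ifs <;> omega
    | 2 =>
      intro hj w
      have h10 : (1 : ℕ) + 0 ≤ k := by omega
      simp only [graphAFusion, Matrix.sub_apply, Matrix.mul_apply, Matrix.transpose_apply]
      have ha : ∀ u : GraphAVertex k, graphAAdj k (graphAApex k) u = pt 0 0 1 0 u := by
        intro u; unfold graphAAdj pt; rw [apex_fst, apex_snd]; split_ifs <;> omega
      simp only [ha]
      rw [sum_pt_fun 1 0 h10 (fun u => graphAAdj k u w)]
      unfold graphAAdj
      simp only [vmk_fst, vmk_snd]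
      rw [apex_fst, apex_snd]
      have hw := w.2
      split_ifs <;>
        (try simp only [false_and, and_false, false_or, or_false, true_and, and_true] at *) <;>
        omega
    | (m + 3) =>
      intro hj w
      have h2k : (m + 2) + 0 ≤ k := by omega
      have h1k : (m + 1) + 0 ≤ k := by omega
      simp only [graphAFusion, Matrix.add_apply, Matrix.sub_apply]
      rw [((commute_fusion k (m + 2)).1).eq, ((commute_fusion k (m + 1)).2).eq]
      simp only [Matrix.mul_apply, Matrix.transpose_apply]
      have r2 : ∀ u : GraphAVertex k, graphAFusion k (m + 2) (graphAApex k) u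
          = pt 0 0 (m + 2) 0 u := by
        intro u; rw [ih (m + 2) (by omega) (by omega) u]; unfold pt; split_ifs <;> omega
      have r1 : ∀ u : GraphAVertex k, graphAFusion k (m + 1) (graphAApex k) u
          = pt 0 0 (m + 1) 0 u := by
        intro u; rw [ih (m + 1) (by omega) (by omega) u]; unfold pt; split_ifs <;> omega
      simp only [r2, r1]
      rw [sum_pt_fun (m + 2) 0 h2k (fun u => graphAAdj k u w),
        sum_pt_fun (m + 1) 0 h1k (fun u => graphAAdj k w u),
        ih m (by omega) (by omega) w]
      unfold graphAAdj
      simp only [vmk_fst, vmk_snd]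
      have hw := w.2
      split_ifs <;>
        (try simp only [false_and, and_false, false_or, or_false, true_and, and_true] at *) <;>
        omega

/-- **The apex row of the fusion matrices**: for every `0 ≤ j ≤ k`, the row of `N_j` at the
apex vertex `(0,0)` is the indicator of the vertex `(j,0)`:
`N_j((0,0),(p,l)) = 1` if `(p,l) = (j,0)` and `0` otherwise. -/
theorem graphAFusion_apex_row (k : ℕ) (hk : 1 ≤ k) (j : ℕ) (hj : j ≤ k)
    (w : GraphAVertex k) :
    graphAFusion k j (graphAApex k) w =
      if ((w.1.1 : ℕ) = j ∧ (w.1.2 : ℕ) = 0) then 1 else 0 :=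
  fusion_apex_row k hk j hj w
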